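/- Let N ≥ 3, s ∈ (0,1), let H ⊂ ℝ^N be a closed half-space with reflection ρ_H, and let w ∈ L²(ℝ^N) be nonnegative. Then (as an inequality of integrals with values in [0,∞]) ∫_{ℝ^N}∫_{ℝ^N} |w^H(x) − w^H(y)|² |x−y|^{−(N+2s)} dx dy ≤ ∫_{ℝ^N}∫_{ℝ^N} |w(x) − w(y)|² |x−y|^{−(N+2s)} dx dy. -/

import Mathlib

open MeasureTheory

/-- Reflection across the boundary hyperplane of the closed half-space
`H = {x : ⟪x, e⟫ ≤ c}` (for a unit vector `e`). -/
noncomputable def reflect (N : ℕ) (e : EuclideanSpace ℝ (Fin N)) (c : ℝ)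
    (x : EuclideanSpace ℝ (Fin N)) : EuclideanSpace ℝ (Fin N) :=
  x - (2 * ((inner ℝ x e : ℝ) - c)) • e

/-- Polarization of `g : ℝ^N → ℝ` with respect to the closed half-space
`H = {x : ⟪x, e⟫ ≤ c}`. -/
noncomputable def polarize (N : ℕ) (e : EuclideanSpace ℝ (Fin N)) (c : ℝ)
    (g : EuclideanSpace ℝ (Fin N) → ℝ) (x : EuclideanSpace ℝ (Fin N)) : ℝ :=
  if (inner ℝ x e : ℝ) ≤ c then max (g x) (g (reflect N e c x))
  else min (g x) (g (reflect N e c x))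

open scoped RealInnerProductSpace ENNReal

section aux
variable {N : ℕ} {e : EuclideanSpace ℝ (Fin N)} {c : ℝ}

lemma inner_ee (he : ‖e‖ = 1) : ⟪e, e⟫ = 1 := by
  rw [real_inner_self_eq_norm_sq, he]; norm_num

lemma inner_reflect (he : ‖e‖ = 1) (x : EuclideanSpace ℝ (Fin N)) :
    ⟪reflect N e c x, e⟫ = 2 * c - ⟪x, e⟫ := by
  rw [reflect, inner_sub_left, real_inner_smul_left, inner_ee he]; ring

lemma reflect_reflect (he : ‖e‖ = 1) (x : EuclideanSpace ℝ (Fin N)) :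
    reflect N e c (reflect N e c x) = x := by
  have h := inner_reflect (c := c) he x
  simp only [reflect] at h ⊢
  rw [h]
  module

lemma reflect_of_eq {x : EuclideanSpace ℝ (Fin N)} (hx : ⟪x, e⟫ = c) :
    reflect N e c x = x := by
  simp [reflect, hx]

lemma sub_reflect (x y : EuclideanSpace ℝ (Fin N)) :
    x - reflect N e c y = (x - y) + (2 * (⟪y, e⟫ - c)) • e := by
  simp only [reflect]; module

lemma norm_sub_reflect_sq (he : ‖e‖ = 1) (x y : EuclideanSpace ℝ (Fin N)) :
    ‖x - reflect N e c y‖ ^ 2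
      = ‖x - y‖ ^ 2 + 4 * ((⟪x, e⟫ - c) * (⟪y, e⟫ - c)) := by
  rw [sub_reflect, norm_add_sq_real, real_inner_smul_right, inner_sub_left,
    norm_smul, Real.norm_eq_abs, he, mul_one, sq_abs]
  ring

lemma norm_reflect_sub_reflect (he : ‖e‖ = 1) (x y : EuclideanSpace ℝ (Fin N)) :
    ‖reflect N e c x - reflect N e c y‖ = ‖x - y‖ := by
  have h : reflect N e c x - reflect N e c y
      = (x - y) - (2 * (⟪x, e⟫ - ⟪y, e⟫)) • e := by
    simp only [reflect]; module
  have hsq : ‖reflect N e c x - reflect N e c y‖ ^ 2 = ‖x - y‖ ^ 2 := by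
    rw [h, norm_sub_sq_real, real_inner_smul_right, inner_sub_left,
      norm_smul, Real.norm_eq_abs, he, mul_one, sq_abs]
    ring
  calc ‖reflect N e c x - reflect N e c y‖
      = Real.sqrt (‖reflect N e c x - reflect N e c y‖ ^ 2) :=
        (Real.sqrt_sq (norm_nonneg _)).symm
    _ = Real.sqrt (‖x - y‖ ^ 2) := by rw [hsq]
    _ = ‖x - y‖ := Real.sqrt_sq (norm_nonneg _)

lemma norm_reflect_sub (he : ‖e‖ = 1) (x y : EuclideanSpace ℝ (Fin N)) :
    ‖reflect N e c x - y‖ = ‖x - reflect N e c y‖ := by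
  have h := norm_reflect_sub_reflect (c := c) he (reflect N e c x) y
  rw [reflect_reflect he] at h
  exact h.symm

lemma continuous_reflect : Continuous (reflect N e c) := by
  unfold reflect
  fun_prop

noncomputable def reflectEquiv (he : ‖e‖ = 1) (c : ℝ) :
    EuclideanSpace ℝ (Fin N) ≃ᵐ EuclideanSpace ℝ (Fin N) where
  toFun := reflect N e c
  invFun := reflect N e c
  left_inv := reflect_reflect he
  right_inv := reflect_reflect he
  measurable_toFun := continuous_reflect.measurable
  measurable_invFun := continuous_reflect.measurable

lemma measurableEmbedding_reflect (he : ‖e‖ = 1) :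
    MeasurableEmbedding (reflect N e c) := (reflectEquiv he c).measurableEmbedding

lemma measurePreserving_reflect (he : ‖e‖ = 1) :
    MeasurePreserving (reflect N e c) volume volume := by
  set L := (Submodule.reflection (ℝ ∙ e)).trans (LinearIsometryEquiv.neg ℝ) with hLdef
  have hL : MeasurePreserving L volume volume := L.measurePreserving
  have h := (measurePreserving_add_right volume ((2*c) • e)).comp hL
  have heq : reflect N e c = (fun y => y + (2*c) • e) ∘ L := by
    funext x
    simp only [Function.comp_apply, hLdef, LinearIsometryEquiv.trans_apply,
      LinearIsometryEquiv.coe_neg, Submodule.reflection_singleton_apply, he, reflect]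
    rw [real_inner_comm e x]
    push_cast
    norm_num
    module
  rw [heq]; exact h

lemma hyperplane_null (he : ‖e‖ = 1) :
    volume {x : EuclideanSpace ℝ (Fin N) | ⟪x, e⟫ = c} = 0 := by
  have h0 : volume {x : EuclideanSpace ℝ (Fin N) | ⟪x, e⟫ = 0} = 0 := by
    have hs : (LinearMap.ker ((innerSL ℝ e : EuclideanSpace ℝ (Fin N) →L[ℝ] ℝ) : EuclideanSpace ℝ (Fin N) →ₗ[ℝ] ℝ) :
        Submodule ℝ (EuclideanSpace ℝ (Fin N))) ≠ ⊤ := by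
      intro h
      have he2 : e ∈ LinearMap.ker ((innerSL ℝ e : EuclideanSpace ℝ (Fin N) →L[ℝ] ℝ) : EuclideanSpace ℝ (Fin N) →ₗ[ℝ] ℝ) := by
        rw [h]; trivial
      simp only [LinearMap.mem_ker, ContinuousLinearMap.coe_coe, innerSL_apply_apply] at he2
      rw [real_inner_self_eq_norm_sq, he] at he2; norm_num at he2
    have hh := Measure.addHaar_submodule (volume : Measure (EuclideanSpace ℝ (Fin N))) _ hs
    convert hh using 2
    ext x
    simp only [Set.mem_setOf_eq, SetLike.mem_coe, LinearMap.mem_ker,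
      ContinuousLinearMap.coe_coe, innerSL_apply_apply]
    rw [real_inner_comm]
  have hpre : {x : EuclideanSpace ℝ (Fin N) | ⟪x, e⟫ = c}
      = (fun x => x + (-c) • e) ⁻¹' {x : EuclideanSpace ℝ (Fin N) | ⟪x, e⟫ = 0} := by
    ext x
    simp only [Set.mem_preimage, Set.mem_setOf_eq, inner_add_left, real_inner_smul_left,
      real_inner_self_eq_norm_sq, he]
    constructor <;> intro h <;> nlinarith
  rw [hpre, measure_preimage_add_right]
  exact h0

lemma measurable_inner_e : Measurable fun x : EuclideanSpace ℝ (Fin N) => ⟪x, e⟫ :=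
  (continuous_id.inner continuous_const).measurable

lemma measurableSet_H : MeasurableSet {x : EuclideanSpace ℝ (Fin N) | ⟪x, e⟫ ≤ c} :=
  measurableSet_le measurable_inner_e measurable_const

lemma polarize_of_le {g : EuclideanSpace ℝ (Fin N) → ℝ} {x : EuclideanSpace ℝ (Fin N)}
    (hx : ⟪x, e⟫ ≤ c) :
    polarize N e c g x = max (g x) (g (reflect N e c x)) := if_pos hx

lemma polarize_reflect_of_le (he : ‖e‖ = 1) {g : EuclideanSpace ℝ (Fin N) → ℝ}
    {x : EuclideanSpace ℝ (Fin N)} (hx : ⟪x, e⟫ ≤ c) :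
    polarize N e c g (reflect N e c x) = min (g x) (g (reflect N e c x)) := by
  rcases eq_or_lt_of_le hx with h | h
  · rw [reflect_of_eq h, min_self, polarize_of_le hx, reflect_of_eq h, max_self]
  · have h2 : ¬ (⟪reflect N e c x, e⟫ ≤ c) := by
      rw [inner_reflect he]; linarith
    rw [polarize, if_neg h2, reflect_reflect he]
    exact min_comm _ _

lemma measurable_polarize {g : EuclideanSpace ℝ (Fin N) → ℝ} (hg : Measurable g) :
    Measurable (polarize N e c g) := by
  unfold polarize
  exact Measurable.ite measurableSet_H
    (hg.max (hg.comp continuous_reflect.measurable))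
    (hg.min (hg.comp continuous_reflect.measurable))

/-- The (squared-difference times kernel) integrand. -/
noncomputable def ker (N : ℕ) (r : ℝ) (f : EuclideanSpace ℝ (Fin N) → ℝ)
    (a b : EuclideanSpace ℝ (Fin N)) : ℝ≥0∞ :=
  ENNReal.ofReal (|f a - f b| ^ 2 * ‖a - b‖ ^ r)

lemma measurable_ker_comp {α : Type*} [MeasurableSpace α] {r : ℝ}
    {f : EuclideanSpace ℝ (Fin N) → ℝ} (hf : Measurable f)
    {u v : α → EuclideanSpace ℝ (Fin N)} (hu : Measurable u) (hv : Measurable v) :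
    Measurable fun a => ker N r f (u a) (v a) := by
  unfold ker
  exact ENNReal.measurable_ofReal.comp
    ((((hf.comp hu).sub (hf.comp hv)).abs.pow_const 2).mul
      ((hu.sub hv).norm.pow measurable_const))

/-- Splitting a lintegral over the half-space using the reflection. -/
lemma split_lintegral (he : ‖e‖ = 1) {φ : EuclideanSpace ℝ (Fin N) → ℝ≥0∞}
    (hφ : Measurable φ) :
    ∫⁻ x, φ x = ∫⁻ x in {x : EuclideanSpace ℝ (Fin N) | ⟪x, e⟫ ≤ c},
      (φ x + φ (reflect N e c x)) := by
  have hHm : MeasurableSet {x : EuclideanSpace ℝ (Fin N) | ⟪x, e⟫ ≤ c} := measurableSet_H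
  have hmp := measurePreserving_reflect (c := c) he
  have hemb := measurableEmbedding_reflect (c := c) he
  have hpre : reflect N e c ⁻¹' {x : EuclideanSpace ℝ (Fin N) | ⟪x, e⟫ ≤ c}ᶜ
      = {y : EuclideanSpace ℝ (Fin N) | ⟪y, e⟫ < c} := by
    ext y
    simp only [Set.mem_preimage, Set.mem_compl_iff, Set.mem_setOf_eq, inner_reflect he,
      not_le]
    constructor <;> intro h <;> linarith
  have haeH : {y : EuclideanSpace ℝ (Fin N) | ⟪y, e⟫ < c}
      =ᵐ[volume] {x : EuclideanSpace ℝ (Fin N) | ⟪x, e⟫ ≤ c} := by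
    refine (MeasureTheory.ae_eq_set).2 ⟨?_, ?_⟩
    · refine measure_mono_null (fun y hy => ?_) (measure_empty (μ := volume))
      simp only [Set.mem_diff, Set.mem_setOf_eq] at hy
      exact absurd hy.1.le hy.2
    · refine measure_mono_null ?_ (hyperplane_null (c := c) he)
      intro y hy
      rcases hy with ⟨h1, h2⟩
      simp only [Set.mem_setOf_eq, not_lt] at h1 h2 ⊢
      exact le_antisymm h1 h2
  have h2 : ∫⁻ x in {x : EuclideanSpace ℝ (Fin N) | ⟪x, e⟫ ≤ c}ᶜ, φ x
      = ∫⁻ x in {x : EuclideanSpace ℝ (Fin N) | ⟪x, e⟫ ≤ c}, φ (reflect N e c x) := by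
    calc ∫⁻ x in {x : EuclideanSpace ℝ (Fin N) | ⟪x, e⟫ ≤ c}ᶜ, φ x
        = ∫⁻ x in reflect N e c ⁻¹' {x : EuclideanSpace ℝ (Fin N) | ⟪x, e⟫ ≤ c}ᶜ,
            φ (reflect N e c x) := (hmp.setLIntegral_comp_preimage_emb hemb _ _).symm
      _ = ∫⁻ x in {y : EuclideanSpace ℝ (Fin N) | ⟪y, e⟫ < c}, φ (reflect N e c x) := by
          rw [hpre]
      _ = _ := setLIntegral_congr haeH
  rw [← lintegral_add_compl φ hHm, h2, ← lintegral_add_left (μ := volume.restrict _) hφ]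

end aux

section aux2
variable {N : ℕ} {e : EuclideanSpace ℝ (Fin N)} {c : ℝ}

lemma key_ineq (u u' v v' K1 K2 : ℝ) (hK2 : 0 ≤ K2) (hK : K2 ≤ K1) :
    ((max u u' - max v v') ^ 2 * K1 + (max u u' - min v v') ^ 2 * K2)
      + ((min u u' - max v v') ^ 2 * K2 + (min u u' - min v v') ^ 2 * K1)
    ≤ ((u - v) ^ 2 * K1 + (u - v') ^ 2 * K2)
      + ((u' - v) ^ 2 * K2 + (u' - v') ^ 2 * K1) := by
  rcases le_total u u' with h1 | h1 <;> rcases le_total v v' with h2 | h2 <;>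
    simp only [max_eq_right, max_eq_left, min_eq_left, min_eq_right, h1, h2] <;>
    nlinarith [mul_nonneg (mul_nonneg (sub_nonneg.2 h1) (sub_nonneg.2 h2)) (sub_nonneg.2 hK),
      mul_nonneg (sub_nonneg.2 h1) (sub_nonneg.2 h2), sub_nonneg.2 hK]

set_option maxHeartbeats 1000000 in
lemma decomp (he : ‖e‖ = 1) {r : ℝ} {f : EuclideanSpace ℝ (Fin N) → ℝ}
    (hf : Measurable f) :
    ∫⁻ x, ∫⁻ y, ker N r f x y
      = ∫⁻ x in {x : EuclideanSpace ℝ (Fin N) | ⟪x, e⟫ ≤ c},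
          ∫⁻ y in {x : EuclideanSpace ℝ (Fin N) | ⟪x, e⟫ ≤ c},
            ((ker N r f x y + ker N r f x (reflect N e c y))
              + (ker N r f (reflect N e c x) y
                  + ker N r f (reflect N e c x) (reflect N e c y))) := by
  have hρ : Measurable (reflect N e c) := continuous_reflect.measurable
  have hmxy : ∀ x : EuclideanSpace ℝ (Fin N),
      Measurable fun y => ker N r f x y + ker N r f x (reflect N e c y) := fun x =>
    (measurable_ker_comp hf measurable_const measurable_id).add
      (measurable_ker_comp hf measurable_const hρ)
  have step1 : ∀ x, (∫⁻ y, ker N r f x y)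
      = ∫⁻ y in {x : EuclideanSpace ℝ (Fin N) | ⟪x, e⟫ ≤ c},
          (ker N r f x y + ker N r f x (reflect N e c y)) := fun x =>
    split_lintegral he (measurable_ker_comp hf measurable_const measurable_id)
  have hinner : Measurable fun x =>
      ∫⁻ y in {x : EuclideanSpace ℝ (Fin N) | ⟪x, e⟫ ≤ c},
        (ker N r f x y + ker N r f x (reflect N e c y)) := by
    apply Measurable.lintegral_prod_right
    exact (measurable_ker_comp hf measurable_fst measurable_snd).add
      (measurable_ker_comp hf measurable_fst (hρ.comp measurable_snd))
  calc ∫⁻ x, ∫⁻ y, ker N r f x y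
      = ∫⁻ x, ∫⁻ y in {x : EuclideanSpace ℝ (Fin N) | ⟪x, e⟫ ≤ c},
          (ker N r f x y + ker N r f x (reflect N e c y)) := lintegral_congr step1
    _ = ∫⁻ x in {x : EuclideanSpace ℝ (Fin N) | ⟪x, e⟫ ≤ c},
          ((∫⁻ y in {x : EuclideanSpace ℝ (Fin N) | ⟪x, e⟫ ≤ c},
              (ker N r f x y + ker N r f x (reflect N e c y)))
            + ∫⁻ y in {x : EuclideanSpace ℝ (Fin N) | ⟪x, e⟫ ≤ c},
              (ker N r f (reflect N e c x) y
                + ker N r f (reflect N e c x) (reflect N e c y))) :=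
        split_lintegral he hinner
    _ = _ := by
        refine lintegral_congr fun x => ?_
        rw [← lintegral_add_left (hmxy x)]

lemma pointwise_ineq (he : ‖e‖ = 1) {r : ℝ} (hr : r < 0)
    {g : EuclideanSpace ℝ (Fin N) → ℝ} {x y : EuclideanSpace ℝ (Fin N)}
    (hx : ⟪x, e⟫ ≤ c) (hy : ⟪y, e⟫ ≤ c) :
    (ker N r (polarize N e c g) x y + ker N r (polarize N e c g) x (reflect N e c y))
      + (ker N r (polarize N e c g) (reflect N e c x) y
          + ker N r (polarize N e c g) (reflect N e c x) (reflect N e c y))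
    ≤ (ker N r g x y + ker N r g x (reflect N e c y))
      + (ker N r g (reflect N e c x) y
          + ker N r g (reflect N e c x) (reflect N e c y)) := by
  have hpx : polarize N e c g x = max (g x) (g (reflect N e c x)) := polarize_of_le hx
  have hpy : polarize N e c g y = max (g y) (g (reflect N e c y)) := polarize_of_le hy
  have hprx : polarize N e c g (reflect N e c x) = min (g x) (g (reflect N e c x)) :=
    polarize_reflect_of_le he hx
  have hpry : polarize N e c g (reflect N e c y) = min (g y) (g (reflect N e c y)) :=
    polarize_reflect_of_le he hy
  by_cases hxy : x = y
  · subst hxy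
    have h1 : ker N r (polarize N e c g) x x = ker N r g x x := by
      unfold ker; simp
    have h4 : ker N r (polarize N e c g) (reflect N e c x) (reflect N e c x)
        = ker N r g (reflect N e c x) (reflect N e c x) := by
      unfold ker; simp
    have hsq1 : ∀ a b : ℝ, (max a b - min a b) ^ 2 = (a - b) ^ 2 := by
      intro a b
      rcases le_total a b with h | h
      · rw [max_eq_right h, min_eq_left h]; ring
      · rw [max_eq_left h, min_eq_right h]
    have hsq2 : ∀ a b : ℝ, (min a b - max a b) ^ 2 = (b - a) ^ 2 := by
      intro a b
      rcases le_total a b with h | h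
      · rw [max_eq_right h, min_eq_left h]; ring
      · rw [max_eq_left h, min_eq_right h]
    have h2 : ker N r (polarize N e c g) x (reflect N e c x)
        = ker N r g x (reflect N e c x) := by
      unfold ker
      rw [hpx, hprx]
      simp only [sq_abs, hsq1, hsq2]
    have h3 : ker N r (polarize N e c g) (reflect N e c x) x
        = ker N r g (reflect N e c x) x := by
      unfold ker
      rw [hpx, hprx]
      simp only [sq_abs, hsq1, hsq2]
    rw [h1, h2, h3, h4]
  · have hK1pos : 0 < ‖x - y‖ := by
      rw [norm_pos_iff]
      exact sub_ne_zero.2 hxy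
    have hle : ‖x - y‖ ≤ ‖x - reflect N e c y‖ := by
      have h1 := norm_sub_reflect_sq (c := c) he x y
      rw [← Real.sqrt_sq (norm_nonneg (x - y)),
        ← Real.sqrt_sq (norm_nonneg (x - reflect N e c y))]
      apply Real.sqrt_le_sqrt
      nlinarith [mul_nonneg (neg_nonneg.2 (sub_nonpos.2 hx)) (neg_nonneg.2 (sub_nonpos.2 hy))]
    have hK : ‖x - reflect N e c y‖ ^ r ≤ ‖x - y‖ ^ r :=
      Real.rpow_le_rpow_of_nonpos hK1pos hle hr.le
    have hK2n : (0:ℝ) ≤ ‖x - reflect N e c y‖ ^ r := Real.rpow_nonneg (norm_nonneg _) r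
    unfold ker
    rw [hpx, hpy, hprx, hpry, norm_reflect_sub_reflect he, norm_reflect_sub he]
    simp only [sq_abs]
    rw [← ENNReal.ofReal_add (by positivity) (by positivity),
      ← ENNReal.ofReal_add (by positivity) (by positivity),
      ← ENNReal.ofReal_add (by positivity) (by positivity),
      ← ENNReal.ofReal_add (by positivity) (by positivity),
      ← ENNReal.ofReal_add (by positivity) (by positivity),
      ← ENNReal.ofReal_add (by positivity) (by positivity)]
    exact ENNReal.ofReal_le_ofReal
      (key_ineq (g x) (g (reflect N e c x)) (g y) (g (reflect N e c y)) _ _ hK2n hK)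

lemma main_aux (he : ‖e‖ = 1) {r : ℝ} (hr : r < 0)
    {g : EuclideanSpace ℝ (Fin N) → ℝ} (hg : Measurable g) :
    ∫⁻ x, ∫⁻ y, ker N r (polarize N e c g) x y ≤ ∫⁻ x, ∫⁻ y, ker N r g x y := by
  rw [decomp he hg, decomp he (measurable_polarize hg)]
  refine lintegral_mono_ae ?_
  filter_upwards [ae_restrict_mem (measurableSet_H (e := e) (c := c))] with x hx
  refine lintegral_mono_ae ?_
  filter_upwards [ae_restrict_mem (measurableSet_H (e := e) (c := c))] with y hy
  exact pointwise_ineq he hr hx hy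

end aux2

theorem gagliardo_seminorm_polarization_le
    (N : ℕ) (hN : 3 ≤ N) (s : ℝ) (hs : s ∈ Set.Ioo (0:ℝ) 1)
    (e : EuclideanSpace ℝ (Fin N)) (he : ‖e‖ = 1) (c : ℝ)
    (w : EuclideanSpace ℝ (Fin N) → ℝ) (hw0 : ∀ x, 0 ≤ w x)
    (hw : MemLp w 2 (volume : Measure (EuclideanSpace ℝ (Fin N)))) :
    ∫⁻ x, ∫⁻ y,
        ENNReal.ofReal (|polarize N e c w x - polarize N e c w y| ^ 2
          * ‖x - y‖ ^ (-((N : ℝ) + 2 * s))) ≤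
      ∫⁻ x, ∫⁻ y,
        ENNReal.ofReal (|w x - w y| ^ 2 * ‖x - y‖ ^ (-((N : ℝ) + 2 * s))) := by
  obtain ⟨hs0, -⟩ := hs
  set r : ℝ := -((N : ℝ) + 2 * s) with hrdef
  have hN3 : (3:ℝ) ≤ (N:ℝ) := by exact_mod_cast hN
  have hr : r < 0 := by rw [hrdef]; nlinarith
  have hae : AEMeasurable w (volume : Measure (EuclideanSpace ℝ (Fin N))) :=
    hw.aestronglyMeasurable.aemeasurable
  set w₀ := hae.mk w with hw₀def
  have hw₀m : Measurable w₀ := hae.measurable_mk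
  have hww₀ : w =ᵐ[volume] w₀ := hae.ae_eq_mk
  have hmp := measurePreserving_reflect (N := N) (c := c) he
  have hcomp : w ∘ (reflect N e c) =ᵐ[volume] w₀ ∘ (reflect N e c) :=
    MeasureTheory.ae_eq_comp hmp.measurable.aemeasurable (by rwa [hmp.map_eq])
  have hpol : polarize N e c w =ᵐ[volume] polarize N e c w₀ := by
    filter_upwards [hww₀, hcomp] with x hx hρx
    simp only [Function.comp_apply] at hρx
    unfold polarize
    rw [hx, hρx]
  have key := main_aux (N := N) (c := c) he hr hw₀m
  refine le_trans (le_of_eq ?_) (le_trans key (le_of_eq ?_))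
  · apply lintegral_congr_ae
    filter_upwards [hpol] with x hx
    apply lintegral_congr_ae
    filter_upwards [hpol] with y hy
    unfold ker
    rw [hx, hy]
  · apply lintegral_congr_ae
    filter_upwards [hww₀] with x hx
    apply lintegral_congr_ae
    filter_upwards [hww₀] with y hy
    unfold ker
    rw [hx, hy]
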